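/- For every n ≥ 1, every choice of digits a_1, …, a_n ≥ m, and every integer k ≥ m, the ratio of normalized Lebesgue measures of cylinders satisfies 1/(6k²) < λ_θ(C(a_1,…,a_n,k)) / λ_θ(C(a_1,…,a_n)) < (m+1)/k². -/
import Mathlib


noncomputable section
open MeasureTheory Filter Set

namespace Theta

/-- θ = 1/√m -/
def th (m : ℕ) : ℝ := 1 / Real.sqrt m

/-- The θ-expansion map T_θ on [0,θ]. -/
def T (m : ℕ) (x : ℝ) : ℝ := if x = 0 then 0 else 1 / x - th m * ⌊1 / (x * th m)⌋₊

/-- The n-th digit a_n(x) (n ≥ 1), a_n(x) = a_1(T_θ^{n-1} x) with a_1(x) = ⌊1/(xθ)⌋. -/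
def a (m n : ℕ) (x : ℝ) : ℕ := ⌊1 / ((T m)^[n - 1] x * th m)⌋₊

/-- Ω: the irrationals in (0,θ). -/
def Omega (m : ℕ) : Set ℝ := {x | x ∈ Set.Ioo 0 (th m) ∧ Irrational x}

/-- Convergent numerators, shifted: `p m x (n+1)` is p_n(x), `p m x 0` is p_{-1} = 1. -/
def p (m : ℕ) (x : ℝ) : ℕ → ℝ
  | 0 => 1
  | 1 => 0
  | n + 2 => (a m (n + 1) x) * th m * p m x (n + 1) + p m x n

/-- Convergent denominators, shifted: `q m x (n+1)` is q_n(x), `q m x 0` is q_{-1} = 0. -/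
def q (m : ℕ) (x : ℝ) : ℕ → ℝ
  | 0 => 0
  | 1 => 1
  | n + 2 => (a m (n + 1) x) * th m * q m x (n + 1) + q m x n

/-- The n-th cylinder determined by the digits d 0, …, d (n-1) (standing for i_1, …, i_n). -/
def cyl (m n : ℕ) (d : ℕ → ℕ) : Set ℝ := {x | x ∈ Omega m ∧ ∀ k < n, a m (k + 1) x = d k}

/-- Convergent denominators determined by the digits d 0, …  (shifted: `qd m d (n+1)` is q_n). -/
def qd (m : ℕ) (d : ℕ → ℕ) : ℕ → ℝ
  | 0 => 0
  | 1 => 1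
  | n + 2 => (d n) * th m * qd m d (n + 1) + qd m d n

/-- Normalized Lebesgue measure on [0,θ]: λ_θ(A) = Leb(A)/θ (as a real number). -/
def lam (m : ℕ) (A : Set ℝ) : ℝ := (volume A).toReal / th m

variable {m : ℕ}

lemma two_le (hm : 2 ≤ m) : (2:ℝ) ≤ (m:ℝ) := by exact_mod_cast hm

lemma th_pos (hm : 2 ≤ m) : 0 < th m := by
  have h2 := two_le hm
  have : (0:ℝ) < Real.sqrt m := Real.sqrt_pos.mpr (by linarith)
  exact div_pos one_pos this

lemma th_sq (hm : 2 ≤ m) : (m:ℝ) * (th m * th m) = 1 := by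
  have h2 := two_le hm
  have h0 : (0:ℝ) ≤ (m:ℝ) := by linarith
  have : Real.sqrt m * Real.sqrt m = m := Real.mul_self_sqrt h0
  have hs : (0:ℝ) < Real.sqrt m := Real.sqrt_pos.mpr (by linarith)
  rw [th, div_mul_div_comm, one_mul, this]
  field_simp

lemma th_lt_one (hm : 2 ≤ m) : th m < 1 := by
  have h2 := two_le hm
  have hs : (1:ℝ) < Real.sqrt m := by
    have := Real.lt_sqrt (x := 1) (y := (m:ℝ)) (by norm_num)
    rw [this]; norm_num; linarith
  rw [th, div_lt_one (by linarith)]; exact hs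

lemma one_lt_mth (hm : 2 ≤ m) : 1 < (m:ℝ) * th m := by
  have h1 := th_pos hm; have h2 := th_lt_one hm; have h3 := th_sq hm
  nlinarith

lemma a_one (x : ℝ) : a m 1 x = ⌊1 / (x * th m)⌋₊ := by simp [a]

lemma a_succ (k : ℕ) (x : ℝ) : a m (k+2) x = a m (k+1) (T m x) := by
  show ⌊1 / ((T m)^[k+1] x * th m)⌋₊ = ⌊1 / ((T m)^[k] (T m x) * th m)⌋₊
  rw [Function.iterate_succ_apply]

lemma a_one_zero : a m 1 (0:ℝ) = 0 := by simp [a_one]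

lemma branch (hm : 2 ≤ m) {x : ℝ} (hx : x ∈ Ioo 0 (th m)) :
    m ≤ a m 1 x ∧ T m x ∈ Ico 0 (th m) ∧
      x * ((a m 1 x : ℝ) * th m + T m x) = 1 := by
  obtain ⟨hx0, hx1⟩ := hx
  have hθ := th_pos hm
  have hθ1 := th_lt_one hm
  have hsq := th_sq hm
  have hxθ : 0 < x * th m := mul_pos hx0 hθ
  have hinv : (m:ℝ) < 1 / (x * th m) := by
    rw [lt_div_iff₀ hxθ]
    nlinarith
  have hc : m ≤ a m 1 x := by
    rw [a_one]; exact Nat.le_floor hinv.le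
  have hfl : ((⌊1 / (x * th m)⌋₊ : ℝ)) ≤ 1 / (x * th m) := Nat.floor_le (by positivity)
  have hfl2 : 1 / (x * th m) < (⌊1 / (x * th m)⌋₊ : ℝ) + 1 := Nat.lt_floor_add_one _
  have hT : T m x = 1 / x - th m * (⌊1 / (x * th m)⌋₊ : ℝ) := by
    rw [T, if_neg hx0.ne']
  have hxne : x ≠ 0 := hx0.ne'
  have key : th m * (1 / (x * th m)) = 1 / x := by
    field_simp
  refine ⟨hc, ⟨?_, ?_⟩, ?_⟩
  · rw [hT]
    have := mul_le_mul_of_nonneg_left hfl hθ.le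
    rw [key] at this; linarith
  · rw [hT]
    have := mul_lt_mul_of_pos_left hfl2 hθ
    rw [key] at this; linarith
  · rw [a_one, hT]
    field_simp
    ring

lemma branch_inv (hm : 2 ≤ m) {c : ℕ} (hc : m ≤ c) {y : ℝ} (hy : y ∈ Ioo 0 (th m))
    {x : ℝ} (hx : x * ((c:ℝ) * th m + y) = 1) :
    x ∈ Ioo 0 (th m) ∧ a m 1 x = c ∧ T m x = y := by
  obtain ⟨hy0, hy1⟩ := hy
  have hθ := th_pos hm
  have hθ1 := th_lt_one hm
  have hsq := th_sq hm
  have h2 := two_le hm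
  have hcR : (m:ℝ) ≤ (c:ℝ) := by exact_mod_cast hc
  have hD : 0 < (c:ℝ) * th m + y := by nlinarith
  have hxval : x = 1 / ((c:ℝ) * th m + y) := by
    field_simp
    linarith [hx]
  have hx0 : 0 < x := by rw [hxval]; positivity
  have hmθ : 0 < (m:ℝ) * th m := by nlinarith
  have hxθ : x < th m := by
    rw [hxval]
    have h1 : (m:ℝ) * th m < (c:ℝ) * th m + y := by nlinarith
    have := one_div_lt_one_div_of_lt hmθ h1
    calc 1 / ((c:ℝ) * th m + y) < 1 / ((m:ℝ) * th m) := this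
      _ = th m := by
          rw [eq_comm, eq_div_iff hmθ.ne']
          nlinarith
  have hinv : 1 / (x * th m) = (c:ℝ) + y / th m := by
    rw [hxval]; field_simp
  have hfloor : a m 1 x = c := by
    rw [a_one, hinv]
    rw [Nat.floor_eq_iff (by positivity)]
    constructor
    · nlinarith [div_nonneg hy0.le hθ.le]
    · have h5 : y / th m < 1 := (div_lt_one hθ).mpr hy1
      push_cast
      linarith
  refine ⟨⟨hx0, hxθ⟩, hfloor, ?_⟩
  rw [T, if_neg hx0.ne']
  have := hfloor
  rw [a_one] at this
  rw [this]
  rw [hxval]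
  field_simp
  ring

def pdd (m : ℕ) (d : ℕ → ℕ) : ℕ → ℝ
  | 0 => 1
  | 1 => 0
  | n + 2 => (d n) * th m * pdd m d (n + 1) + pdd m d n

lemma qd_nonneg (hm : 2 ≤ m) (d : ℕ → ℕ) : ∀ j, 0 ≤ qd m d j := by
  have hθ := th_pos hm
  intro j
  induction j using Nat.twoStepInduction with
  | zero => simp [qd]
  | one => simp [qd]
  | more j ih1 ih2 =>
    show 0 ≤ (d j : ℝ) * th m * qd m d (j+1) + qd m d j
    positivity

lemma pdd_nonneg (hm : 2 ≤ m) (d : ℕ → ℕ) : ∀ j, 0 ≤ pdd m d j := by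
  have hθ := th_pos hm
  intro j
  induction j using Nat.twoStepInduction with
  | zero => simp [pdd]
  | one => simp [pdd]
  | more j ih1 ih2 =>
    show 0 ≤ (d j : ℝ) * th m * pdd m d (j+1) + pdd m d j
    positivity

lemma qd_one_le (hm : 2 ≤ m) {d : ℕ → ℕ} : ∀ n, (∀ i < n, m ≤ d i) → 1 ≤ qd m d (n+1) := by
  have hθ := th_pos hm
  have hmθ := one_lt_mth hm
  intro n
  induction n with
  | zero => intro _; simp [qd]
  | succ n ih =>
    intro hd
    have h1 := ih (fun i hi => hd i (by omega))
    have h2 := qd_nonneg hm d n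
    have h3 : (m:ℝ) ≤ (d n : ℝ) := by exact_mod_cast hd n (by omega)
    have h4 : (m:ℝ) * th m ≤ (d n : ℝ) * th m := by nlinarith
    have h5 := mul_le_mul h4 h1 zero_le_one (by positivity : (0:ℝ) ≤ (d n : ℝ) * th m)
    show 1 ≤ (d n : ℝ) * th m * qd m d (n+1) + qd m d n
    nlinarith

lemma qd_le (hm : 2 ≤ m) {d : ℕ → ℕ} : ∀ n, (∀ i < n, m ≤ d i) →
    qd m d n ≤ th m * qd m d (n+1) := by
  have hθ := th_pos hm
  have hsq := th_sq hm
  intro n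
  induction n with
  | zero => intro _; simp [qd]; positivity
  | succ n ih =>
    intro hd
    have h1 := ih (fun i hi => hd i (by omega))
    have h2 := qd_nonneg hm d n
    have h2' := qd_nonneg hm d (n+1)
    have h3 : (m:ℝ) ≤ (d n : ℝ) := by exact_mod_cast hd n (by omega)
    have h6 : ((m:ℝ) * (th m * th m) - 1) * qd m d (n+1) = 0 := by rw [hsq]; ring
    have h7 : 0 ≤ ((d n : ℝ) - m) * (th m * th m) * qd m d (n+1) := by
      apply mul_nonneg (mul_nonneg (by linarith) (by positivity)) h2'
    have h8 : 0 ≤ th m * qd m d n := by positivity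
    show qd m d (n+1) ≤ th m * ((d n : ℝ) * th m * qd m d (n+1) + qd m d n)
    nlinarith

lemma qd_det (d : ℕ → ℕ) : ∀ n, qd m d (n+1) * pdd m d n - qd m d n * pdd m d (n+1) = (-1)^n := by
  intro n
  induction n with
  | zero => simp [qd, pdd]
  | succ n ih =>
    show ((d n : ℝ) * th m * qd m d (n+1) + qd m d n) * pdd m d (n+1) -
        qd m d (n+1) * ((d n : ℝ) * th m * pdd m d (n+1) + pdd m d n) = (-1)^(n+1)
    have h : ((-1:ℝ))^(n+1) = -((-1)^n) := by ring
    rw [h]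
    linear_combination -ih

lemma qd_congr {d1 d2 : ℕ → ℕ} : ∀ j, (∀ i, i + 2 ≤ j → d1 i = d2 i) → qd m d1 j = qd m d2 j := by
  intro j
  induction j using Nat.twoStepInduction with
  | zero => intro _; simp [qd]
  | one => intro _; simp [qd]
  | more j ih1 ih2 =>
    intro h
    show (d1 j : ℝ) * th m * qd m d1 (j+1) + qd m d1 j =
      (d2 j : ℝ) * th m * qd m d2 (j+1) + qd m d2 j
    rw [h j (by omega), ih2 (fun i hi => h i (by omega)), ih1 (fun i hi => h i (by omega))]

lemma cons_pq (d : ℕ → ℕ) : ∀ j, pdd m d (j+1) = qd m (fun i => d (i+1)) j ∧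
    qd m d (j+1) = pdd m (fun i => d (i+1)) j + (d 0 : ℝ) * th m * qd m (fun i => d (i+1)) j := by
  intro j
  induction j using Nat.twoStepInduction with
  | zero => simp [qd, pdd]
  | one => constructor <;> norm_num [qd, pdd]
  | more j ih1 ih2 =>
    obtain ⟨ihp1, ihq1⟩ := ih1
    obtain ⟨ihp2, ihq2⟩ := ih2
    constructor
    · show (d (j+1) : ℝ) * th m * pdd m d (j+2) + pdd m d (j+1) = qd m (fun i => d (i+1)) (j+2)
      rw [ihp1, ihp2]
      show (d (j+1) : ℝ) * th m * qd m (fun i => d (i+1)) (j+1) + qd m (fun i => d (i+1)) j =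
        ((fun i => d (i+1)) j : ℝ) * th m * qd m (fun i => d (i+1)) (j+1) + qd m (fun i => d (i+1)) j
      rfl
    · show (d (j+1) : ℝ) * th m * qd m d (j+2) + qd m d (j+1) =
        pdd m (fun i => d (i+1)) (j+2) + (d 0 : ℝ) * th m * qd m (fun i => d (i+1)) (j+2)
      rw [ihq1, ihq2]
      show _ = ((fun i => d (i+1)) j : ℝ) * th m * pdd m (fun i => d (i+1)) (j+1) + pdd m (fun i => d (i+1)) j
        + (d 0 : ℝ) * th m * (((fun i => d (i+1)) j : ℝ) * th m * qd m (fun i => d (i+1)) (j+1) + qd m (fun i => d (i+1)) j)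
      simp only []
      ring

lemma C1 (hm : 2 ≤ m) : ∀ (n : ℕ) (d : ℕ → ℕ) (x : ℝ), x ∈ Ioo 0 (th m) →
    (∀ k < n, m ≤ d k) → (∀ k < n, a m (k+1) x = d k) →
    ∃ t ∈ Ico 0 (th m), x * (qd m d (n+1) + t * qd m d n) = pdd m d (n+1) + t * pdd m d n := by
  intro n
  induction n with
  | zero =>
    intro d x hx _ _
    exact ⟨x, Ioo_subset_Ico_self hx, by simp [qd, pdd]⟩
  | succ n ih =>
    intro d x hx hd hdig
    obtain ⟨hc, hT, heq⟩ := branch hm hx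
    have ha0 : a m 1 x = d 0 := hdig 0 (by omega)
    rw [ha0] at heq
    by_cases h0 : T m x = 0
    · match n with
      | 0 =>
        refine ⟨0, ⟨le_refl _, th_pos hm⟩, ?_⟩
        rw [h0] at heq
        show x * ((d 0 : ℝ) * th m * qd m d 1 + qd m d 0 + 0 * qd m d 1) =
          (d 0 : ℝ) * th m * pdd m d 1 + pdd m d 0 + 0 * pdd m d 1
        simp [qd, pdd]
        linear_combination heq
      | n + 1 =>
        exfalso
        have h1 : a m 2 x = d 1 := hdig 1 (by omega)
        rw [a_succ, h0, a_one_zero] at h1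
        have := hd 1 (by omega)
        omega
    · have hT' : T m x ∈ Ioo 0 (th m) := ⟨lt_of_le_of_ne hT.1 (Ne.symm h0), hT.2⟩
      obtain ⟨t, ht, heq2⟩ := ih (fun i => d (i+1)) (T m x) hT'
        (fun k hk => hd (k+1) (by omega))
        (fun k hk => by rw [← a_succ]; exact hdig (k+1) (by omega))
      refine ⟨t, ht, ?_⟩
      rw [(cons_pq d (n+1)).1, (cons_pq d (n+1)).2, (cons_pq d n).1, (cons_pq d n).2]
      linear_combination (-x) * heq2 +
        (qd m (fun i => d (i+1)) (n+1) + t * qd m (fun i => d (i+1)) n) * heq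

lemma C2 (hm : 2 ≤ m) : ∀ (n : ℕ) (d : ℕ → ℕ) (x t : ℝ), t ∈ Ioo 0 (th m) →
    (∀ k < n, m ≤ d k) →
    x * (qd m d (n+1) + t * qd m d n) = pdd m d (n+1) + t * pdd m d n →
    x ∈ Ioo 0 (th m) ∧ ∀ k < n, a m (k+1) x = d k := by
  intro n
  induction n with
  | zero =>
    intro d x t ht _ heq
    simp [qd, pdd] at heq
    exact ⟨heq ▸ ht, fun k hk => absurd hk (by omega)⟩
  | succ n ih =>
    intro d x t ht hd heq
    set d' : ℕ → ℕ := fun i => d (i+1) with hd'def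
    have hd' : ∀ k < n, m ≤ d' k := fun k hk => hd (k+1) (by omega)
    have hQs : 0 < qd m d' (n+1) + t * qd m d' n := by
      have h1 := qd_one_le hm n hd'
      have h2 := qd_nonneg hm d' n
      nlinarith [ht.1]
    set y : ℝ := (pdd m d' (n+1) + t * pdd m d' n) / (qd m d' (n+1) + t * qd m d' n) with hydef
    have hy : y * (qd m d' (n+1) + t * qd m d' n) = pdd m d' (n+1) + t * pdd m d' n :=
      div_mul_cancel₀ _ hQs.ne'
    obtain ⟨hyIoo, hydig⟩ := ih d' y t ht hd' hy
    have heq' : x * ((d 0 : ℝ) * th m + y) * (qd m d' (n+1) + t * qd m d' n) =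
        1 * (qd m d' (n+1) + t * qd m d' n) := by
      rw [(cons_pq d (n+1)).1, (cons_pq d (n+1)).2, (cons_pq d n).1, (cons_pq d n).2] at heq
      linear_combination heq + x * hy
    have hxeq : x * ((d 0 : ℝ) * th m + y) = 1 := mul_right_cancel₀ hQs.ne' heq'
    obtain ⟨hxIoo, ha1, hTx⟩ := branch_inv hm (hd 0 (by omega)) hyIoo hxeq
    refine ⟨hxIoo, ?_⟩
    intro k hk
    match k with
    | 0 => exact ha1
    | k + 1 =>
      rw [a_succ, hTx]
      exact hydig k (by omega)

lemma vol_image (hm : 2 ≤ m) (P p Q q : ℝ) (hQ : 1 ≤ Q) (hq : 0 ≤ q)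
    (hdet : Q * p - q * P = 1 ∨ Q * p - q * P = -1) :
    volume ((fun t => (P + t * p) / (Q + t * q)) '' Ioo 0 (th m)) =
      ENNReal.ofReal (th m / (Q * (Q + th m * q))) := by
  have hθ := th_pos hm
  set ψ : ℝ → ℝ := fun t => (P + t * p) / (Q + t * q) with hψ
  have hden : ∀ t : ℝ, 0 ≤ t → 0 < Q + t * q := fun t htt => by nlinarith
  have hcont : ContinuousOn ψ (Icc 0 (th m)) := by
    apply ContinuousOn.div (by fun_prop) (by fun_prop)
    exact fun t htt => (hden t htt.1).ne'
  have hdiff : ∀ t s : ℝ, 0 ≤ t → 0 ≤ s →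
      ψ t - ψ s = ((t - s) * (Q * p - q * P)) / ((Q + t * q) * (Q + s * q)) := by
    intro t s htt hss
    have h1 := hden t htt
    have h2 := hden s hss
    rw [hψ]
    rw [div_sub_div _ _ h1.ne' h2.ne']
    congr 1
    ring
  rcases hdet with hδ | hδ
  · have hmono : ∀ t s : ℝ, 0 ≤ s → s < t → ψ s < ψ t := by
      intro t s hss hst
      have := hdiff t s (le_trans hss hst.le) hss
      rw [hδ] at this
      have h1 := hden t (le_trans hss hst.le)
      have h2 := hden s hss
      have : 0 < ψ t - ψ s := by
        rw [this]
        apply div_pos (by nlinarith) (by positivity)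
      linarith
    have himg : ψ '' Ioo 0 (th m) = Ioo (ψ 0) (ψ (th m)) := by
      apply Subset.antisymm
      · rintro _ ⟨t, ht, rfl⟩
        exact ⟨hmono t 0 le_rfl ht.1, hmono (th m) t ht.1.le ht.2⟩
      · exact intermediate_value_Ioo hθ.le hcont
    rw [himg, Real.volume_Ioo]
    congr 1
    have h5 := hdiff (th m) 0 hθ.le le_rfl
    rw [hδ] at h5
    rw [h5]
    ring_nf
  · have hmono : ∀ t s : ℝ, 0 ≤ s → s < t → ψ t < ψ s := by
      intro t s hss hst
      have := hdiff t s (le_trans hss hst.le) hss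
      rw [hδ] at this
      have h1 := hden t (le_trans hss hst.le)
      have h2 := hden s hss
      have h3 : ψ t - ψ s < 0 := by
        rw [this]
        apply div_neg_of_neg_of_pos (by nlinarith) (by positivity)
      linarith
    have himg : ψ '' Ioo 0 (th m) = Ioo (ψ (th m)) (ψ 0) := by
      apply Subset.antisymm
      · rintro _ ⟨t, ht, rfl⟩
        exact ⟨hmono (th m) t ht.1.le ht.2, hmono t 0 le_rfl ht.1⟩
      · exact intermediate_value_Ioo' hθ.le hcont
    rw [himg, Real.volume_Ioo]
    congr 1
    have h5 := hdiff 0 (th m) le_rfl hθ.le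
    rw [hδ] at h5
    rw [h5]
    ring_nf

lemma vol_cyl (hm : 2 ≤ m) (n : ℕ) (d : ℕ → ℕ) (hd : ∀ i < n, m ≤ d i) :
    volume (cyl m n d) =
      ENNReal.ofReal (th m / (qd m d (n+1) * (qd m d (n+1) + th m * qd m d n))) := by
  have hθ := th_pos hm
  set P := pdd m d (n+1)
  set p := pdd m d n
  set Q := qd m d (n+1)
  set q := qd m d n
  have hQ1 : 1 ≤ Q := qd_one_le hm n hd
  have hq0 : 0 ≤ q := qd_nonneg hm d n
  have hdet : Q * p - q * P = 1 ∨ Q * p - q * P = -1 := by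
    have := qd_det (m := m) d n
    rcases Nat.even_or_odd n with he | ho
    · left; rw [this, he.neg_one_pow]
    · right; rw [this, ho.neg_one_pow]
  set ψ : ℝ → ℝ := fun t => (P + t * p) / (Q + t * q) with hψ
  set S : Set ℝ := ψ '' Ioo 0 (th m) with hS
  have hden : ∀ t : ℝ, 0 ≤ t → 0 < Q + t * q := fun t htt => by nlinarith
  have hSsub : ∀ x ∈ S, x ∈ Ioo 0 (th m) ∧ ∀ k < n, a m (k+1) x = d k := by
    rintro _ ⟨t, ht, rfl⟩
    have hdn := hden t ht.1.le
    exact C2 hm n d (ψ t) t ht hd (div_mul_cancel₀ _ hdn.ne')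
  have key1 : Omega m ∩ S ⊆ cyl m n d := by
    rintro x ⟨hΩ, hxS⟩
    exact ⟨hΩ, (hSsub x hxS).2⟩
  have key2 : cyl m n d ⊆ (Omega m ∩ S) ∪ {P / Q} := by
    rintro x ⟨hΩ, hdig⟩
    obtain ⟨t, ht, heq⟩ := C1 hm n d x hΩ.1 hd hdig
    rcases eq_or_lt_of_le ht.1 with h0 | h0
    · right
      simp only [mem_singleton_iff]
      rw [← h0] at heq
      simp only [zero_mul, add_zero] at heq
      have hdn := hden 0 le_rfl
      simp only [zero_mul, add_zero] at hdn
      field_simp at heq ⊢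
      linarith [heq]
    · left
      refine ⟨hΩ, ⟨t, ⟨h0, ht.2⟩, ?_⟩⟩
      have hdn := hden t ht.1
      show (P + t * p) / (Q + t * q) = x
      rw [div_eq_iff hdn.ne']
      linarith [heq]
  have hcount : volume (Set.range ((↑) : ℚ → ℝ)) = 0 :=
    (Set.countable_range _).measure_zero _
  have key3 : Omega m ∩ S = S \ Set.range ((↑) : ℚ → ℝ) := by
    ext x
    constructor
    · rintro ⟨hΩ, hxS⟩; exact ⟨hxS, hΩ.2⟩
    · rintro ⟨hxS, hx⟩; exact ⟨⟨(hSsub x hxS).1, hx⟩, hxS⟩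
  have hvolΩS : volume (Omega m ∩ S) = volume S := by
    rw [key3]
    exact measure_diff_null hcount
  have hle1 : volume S ≤ volume (cyl m n d) := by
    rw [← hvolΩS]; exact measure_mono key1
  have hle2 : volume (cyl m n d) ≤ volume S := by
    calc volume (cyl m n d) ≤ volume ((Omega m ∩ S) ∪ {P / Q}) := measure_mono key2
      _ ≤ volume (Omega m ∩ S) + volume ({P / Q} : Set ℝ) := measure_union_le _ _
      _ = volume S := by rw [hvolΩS, Real.volume_singleton, add_zero]
  have : volume (cyl m n d) = volume S := le_antisymm hle2 hle1
  rw [this, hS]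
  exact vol_image hm P p Q q hQ1 hq0 hdet

lemma lam_cyl (hm : 2 ≤ m) (n : ℕ) (d : ℕ → ℕ) (hd : ∀ i < n, m ≤ d i) :
    lam m (cyl m n d) = 1 / (qd m d (n+1) * (qd m d (n+1) + th m * qd m d n)) := by
  have hθ := th_pos hm
  have hQ1 : 1 ≤ qd m d (n+1) := qd_one_le hm n hd
  have hq0 : 0 ≤ qd m d n := qd_nonneg hm d n
  have h1 : 0 < qd m d (n+1) + th m * qd m d n := by nlinarith [mul_nonneg hθ.le hq0]
  have hpos : 0 < qd m d (n+1) * (qd m d (n+1) + th m * qd m d n) := mul_pos (by linarith) h1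
  rw [lam, vol_cyl hm n d hd, ENNReal.toReal_ofReal (by positivity)]
  rw [div_div, mul_comm (qd m d (n+1) * (qd m d (n+1) + th m * qd m d n)) (th m)]
  rw [← div_div, div_self hθ.ne']

set_option maxHeartbeats 1000000 in
lemma bounds (hm : 2 ≤ m) (k : ℕ) (hk : m ≤ k) {Q q : ℝ}
    (hQ1 : 1 ≤ Q) (hq0 : 0 ≤ q) (hqle : q ≤ th m * Q) :
    1 / (6 * (k : ℝ) ^ 2) <
        (Q * (Q + th m * q)) /
          (((k:ℝ) * th m * Q + q) * (((k:ℝ) * th m * Q + q) + th m * Q)) ∧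
      (Q * (Q + th m * q)) /
          (((k:ℝ) * th m * Q + q) * (((k:ℝ) * th m * Q + q) + th m * Q)) <
        ((m : ℝ) + 1) / (k : ℝ) ^ 2 := by
  have hθ := th_pos hm
  have hθ1 := th_lt_one hm
  have hsq := th_sq hm
  have hm2 : (2:ℝ) ≤ (m:ℝ) := two_le hm
  have hk2 : (2:ℝ) ≤ (k:ℝ) := by
    have : 2 ≤ k := le_trans hm hk
    exact_mod_cast this
  have hθq : 0 ≤ th m * q := by positivity
  have hθQ : 0 < th m * Q := mul_pos hθ (by linarith)
  have hN1 : 0 < Q * (Q + th m * q) := mul_pos (by linarith) (by linarith)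
  have hQ2pos : 0 < (k:ℝ) * th m * Q + q := by nlinarith
  have hN2 : 0 < ((k:ℝ) * th m * Q + q) * (((k:ℝ) * th m * Q + q) + th m * Q) :=
    mul_pos hQ2pos (by linarith)
  constructor
  · rw [div_lt_div_iff₀ (by positivity) hN2]
    have e3 : ((k:ℝ) * th m * Q + q) * (((k:ℝ) * th m * Q + q) + th m * Q) ≤
        ((k:ℝ) * th m * Q + th m * Q) * ((k:ℝ) * th m * Q + 2*(th m * Q)) :=
      mul_le_mul (by linarith) (by linarith) (by linarith) (by positivity)
    have e4 : ((k:ℝ) * th m * Q + th m * Q) * ((k:ℝ) * th m * Q + 2*(th m * Q)) =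
        (th m * th m) * (Q * Q) * (((k:ℝ)+1) * ((k:ℝ)+2)) := by ring
    rw [e4] at e3
    have e5 : 2 * (th m * th m) ≤ 1 := by
      nlinarith [mul_nonneg (mul_nonneg hθ.le hθ.le) (by linarith : (0:ℝ) ≤ (m:ℝ) - 2)]
    have e6 : ((k:ℝ)+1) * ((k:ℝ)+2) ≤ 3 * (k:ℝ)^2 := by nlinarith [sq_nonneg ((k:ℝ) - 2)]
    have e7 : (th m * th m) * (Q * Q) * (((k:ℝ)+1) * ((k:ℝ)+2)) ≤
        (th m * th m) * (Q * Q) * (3 * (k:ℝ)^2) :=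
      mul_le_mul_of_nonneg_left e6 (by positivity)
    have e8 : (th m * th m) * (Q * Q) * (3 * (k:ℝ)^2) ≤ (1/2) * (Q * Q) * (3 * (k:ℝ)^2) := by
      nlinarith [mul_nonneg (mul_nonneg (by positivity : (0:ℝ) ≤ Q * Q)
        (by positivity : (0:ℝ) ≤ 3 * (k:ℝ)^2)) (by linarith : (0:ℝ) ≤ 1 - 2 * (th m * th m))]
    have e9 : Q * Q ≤ Q * (Q + th m * q) := by nlinarith [mul_nonneg (by linarith : (0:ℝ) ≤ Q) hθq]
    have e10 : (1/2) * (Q * Q) * (3 * (k:ℝ)^2) ≤ (3/2) * (k:ℝ)^2 * (Q * (Q + th m * q)) := by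
      nlinarith [mul_le_mul_of_nonneg_left e9 (by positivity : (0:ℝ) ≤ (3/2) * (k:ℝ)^2)]
    have hpos : 0 < (k:ℝ)^2 * (Q * (Q + th m * q)) := mul_pos (by positivity) hN1
    linarith
  · rw [div_lt_div_iff₀ hN2 (by positivity)]
    have key : (th m * th m) * (((m:ℝ) + 1) * ((((k:ℝ) * th m * Q + q) * (((k:ℝ) * th m * Q + q) + th m * Q))) - (k:ℝ)^2 * (Q * (Q + th m * q))) =
        (k:ℝ)^2 * (th m)^3 * Q * (th m * Q - q) +
        (1 + th m * th m) * ((k:ℝ) * (th m * th m) * Q^2 + th m * q * Q * (2*(k:ℝ)+1) + q^2) := by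
      linear_combination (((k:ℝ) * th m * Q + q) * (((k:ℝ) * th m * Q + q) + th m * Q)) * hsq
    have hpos1 : 0 ≤ (k:ℝ)^2 * (th m)^3 * Q * (th m * Q - q) :=
      mul_nonneg (by positivity) (by linarith)
    have hpos2 : 0 < (1 + th m * th m) * ((k:ℝ) * (th m * th m) * Q^2 + th m * q * Q * (2*(k:ℝ)+1) + q^2) := by
      apply mul_pos (by positivity)
      have t1 : 0 < (k:ℝ) * (th m * th m) * Q^2 := by positivity
      have t2 : 0 ≤ th m * q * Q * (2*(k:ℝ)+1) :=
        mul_nonneg (mul_nonneg hθq (by linarith)) (by linarith)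
      have t3 : 0 ≤ q^2 := sq_nonneg q
      linarith
    have hX : 0 < (th m * th m) * (((m:ℝ) + 1) * ((((k:ℝ) * th m * Q + q) * (((k:ℝ) * th m * Q + q) + th m * Q))) - (k:ℝ)^2 * (Q * (Q + th m * q))) := by
      rw [key]; linarith
    have h9 := div_pos hX (mul_pos hθ hθ)
    rw [mul_div_cancel_left₀ _ (by positivity : (th m * th m) ≠ 0)] at h9
    linarith

/-- 1/(6k²) < λ_θ(C(a_1,…,a_n,k)) / λ_θ(C(a_1,…,a_n)) < (m+1)/k². -/
theorem stmt_6 (m : ℕ) (hm : 2 ≤ m) (n : ℕ) (hn : 1 ≤ n) (d : ℕ → ℕ)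
    (hd : ∀ i < n, m ≤ d i) (k : ℕ) (hk : m ≤ k) :
    1 / (6 * (k : ℝ) ^ 2) <
        lam m (cyl m (n + 1) (Function.update d n k)) / lam m (cyl m n d) ∧
      lam m (cyl m (n + 1) (Function.update d n k)) / lam m (cyl m n d) <
        ((m : ℝ) + 1) / (k : ℝ) ^ 2 := by
  have hθ := th_pos hm
  have hd' : ∀ i < n + 1, m ≤ Function.update d n k i := by
    intro i hi
    rcases eq_or_ne i n with rfl | hne
    · rw [Function.update_self]; exact hk
    · rw [Function.update_of_ne hne]; exact hd i (by omega)
  have hagree : ∀ j, j ≤ n + 1 → qd m (Function.update d n k) j = qd m d j := by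
    intro j hj
    apply qd_congr
    intro i hi
    rw [Function.update_of_ne (by omega)]
  have hQ1 : 1 ≤ qd m d (n+1) := qd_one_le hm n hd
  have hq0 : 0 ≤ qd m d n := qd_nonneg hm d n
  have hqle : qd m d n ≤ th m * qd m d (n+1) := qd_le hm n hd
  have hQ2 : qd m (Function.update d n k) (n+2) = (k:ℝ) * th m * qd m d (n+1) + qd m d n := by
    show (Function.update d n k n : ℝ) * th m * qd m (Function.update d n k) (n+1) +
      qd m (Function.update d n k) n = _
    rw [hagree (n+1) (by omega), hagree n (by omega), Function.update_self]
  have hlamden : lam m (cyl m n d) = 1 / (qd m d (n+1) * (qd m d (n+1) + th m * qd m d n)) :=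
    lam_cyl hm n d hd
  have hlamnum : lam m (cyl m (n+1) (Function.update d n k)) =
      1 / (((k:ℝ) * th m * qd m d (n+1) + qd m d n) *
        (((k:ℝ) * th m * qd m d (n+1) + qd m d n) + th m * qd m d (n+1))) := by
    rw [lam_cyl hm (n+1) (Function.update d n k) hd', hQ2, hagree (n+1) (by omega)]
  have hθq : 0 ≤ th m * qd m d n := by positivity
  have hN1 : 0 < qd m d (n+1) * (qd m d (n+1) + th m * qd m d n) :=
    mul_pos (by linarith) (by linarith)
  have hQ2pos : 0 < (k:ℝ) * th m * qd m d (n+1) + qd m d n := by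
    have hk2 : (2:ℝ) ≤ (k:ℝ) := by
      have : 2 ≤ k := le_trans hm hk
      exact_mod_cast this
    nlinarith
  have hN2 : 0 < ((k:ℝ) * th m * qd m d (n+1) + qd m d n) *
      (((k:ℝ) * th m * qd m d (n+1) + qd m d n) + th m * qd m d (n+1)) :=
    mul_pos hQ2pos (by nlinarith)
  have hratio : lam m (cyl m (n + 1) (Function.update d n k)) / lam m (cyl m n d) =
      (qd m d (n+1) * (qd m d (n+1) + th m * qd m d n)) /
        (((k:ℝ) * th m * qd m d (n+1) + qd m d n) *
          (((k:ℝ) * th m * qd m d (n+1) + qd m d n) + th m * qd m d (n+1))) := by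
    rw [hlamnum, hlamden, div_div_div_comm, div_one, one_div_div]
  rw [hratio]
  exact bounds hm k hk hQ1 hq0 hqle

end Theta
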